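/- Let G be a Garside group of finite type and x ∈ G. If x^α ∈ SSS(x) and x^β ∈ SSS(x) for elements α, β ∈ G, then x^{α∨β} ∈ SSS(x). -/

import Mathlib

namespace GarsidePaper

/-- A Garside structure of finite type on a group `G`: a positive submonoid `P` with
`P ∩ P⁻¹ = {1}`, a Garside element `Δ ∈ P`, the prefix order `a ≼ b ↔ a⁻¹b ∈ P`
a lattice order (with meet `wedge` and join `vee`), the simple elements `[1,Δ]`
generating `G` and being finite, `Δ⁻¹PΔ = P`, a finite norm on positive elements,
and the infimum and supremum functions `inf`, `sup` characterised by
`Δ^(inf x) ≼ x ≼ Δ^(sup x)` with `inf x` maximal and `sup x` minimal. -/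
structure Garside (G : Type*) [Group G] where
  P : Submonoid G
  Δ : G
  purity : ∀ a : G, a ∈ P → a⁻¹ ∈ P → a = 1
  delta_mem : Δ ∈ P
  wedge : G → G → G
  vee : G → G → G
  wedge_le_left : ∀ a b : G, (wedge a b)⁻¹ * a ∈ P
  wedge_le_right : ∀ a b : G, (wedge a b)⁻¹ * b ∈ P
  le_wedge : ∀ a b c : G, c⁻¹ * a ∈ P → c⁻¹ * b ∈ P → c⁻¹ * wedge a b ∈ P
  le_vee_left : ∀ a b : G, a⁻¹ * vee a b ∈ P
  le_vee_right : ∀ a b : G, b⁻¹ * vee a b ∈ P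
  vee_le : ∀ a b c : G, a⁻¹ * c ∈ P → b⁻¹ * c ∈ P → (vee a b)⁻¹ * c ∈ P
  simples_generate : Subgroup.closure {a : G | a ∈ P ∧ a⁻¹ * Δ ∈ P} = (⊤ : Subgroup G)
  conj_pos : ∀ a : G, a ∈ P → Δ⁻¹ * a * Δ ∈ P
  norm : G → ℕ
  norm_exists : ∀ x : G, x ∈ P → x ≠ 1 →
    ∃ l : List G, (∀ s ∈ l, s ∈ P ∧ s ≠ 1) ∧ l.prod = x ∧ l.length = norm x
  norm_max : ∀ x : G, x ∈ P → x ≠ 1 →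
    ∀ l : List G, (∀ s ∈ l, s ∈ P ∧ s ≠ 1) → l.prod = x → l.length ≤ norm x
  simples_finite : Set.Finite {a : G | a ∈ P ∧ a⁻¹ * Δ ∈ P}
  inf : G → ℤ
  sup : G → ℤ
  inf_le : ∀ x : G, (Δ ^ inf x)⁻¹ * x ∈ P
  inf_max : ∀ (x : G) (p : ℤ), (Δ ^ p)⁻¹ * x ∈ P → p ≤ inf x
  le_sup : ∀ x : G, x⁻¹ * Δ ^ sup x ∈ P
  sup_min : ∀ (x : G) (q : ℤ), x⁻¹ * Δ ^ q ∈ P → sup x ≤ q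

namespace Garside

variable {G : Type*} [Group G]

/-- The prefix order `a ≼ b`. -/
def le (S : Garside G) (a b : G) : Prop := a⁻¹ * b ∈ S.P

/-- The canonical length `ℓ(x) = sup(x) - inf(x)`. -/
def len (S : Garside G) (x : G) : ℤ := S.sup x - S.inf x

/-- The initial factor `ι(x) = (x Δ^(-inf x)) ∧ Δ`. -/
def iota (S : Garside G) (x : G) : G := S.wedge (x * S.Δ ^ (-S.inf x)) S.Δ

/-- The preferred prefix `𝔭(x) = ι(x) ∧ ι(x⁻¹)`. -/
def pp (S : Garside G) (x : G) : G := S.wedge (S.iota x) (S.iota x⁻¹)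

/-- Cyclic sliding `𝔰(x) = 𝔭(x)⁻¹ x 𝔭(x)`. -/
def sl (S : Garside G) (x : G) : G := (S.pp x)⁻¹ * x * S.pp x

/-- The final factor `φ(x) = (Δ^(sup x - 1) ∧ x)⁻¹ x`. -/
def phi (S : Garside G) (x : G) : G := (S.wedge (S.Δ ^ (S.sup x - 1)) x)⁻¹ * x

/-- Conjugation by `Δ`: `τ(x) = Δ⁻¹ x Δ`. -/
def tau (S : Garside G) (x : G) : G := S.Δ⁻¹ * x * S.Δ

/-- Cycling `c(x) = ι(x)⁻¹ x ι(x)`. -/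
def cyc (S : Garside G) (x : G) : G := (S.iota x)⁻¹ * x * S.iota x

/-- Decycling `d(x) = φ(x) x φ(x)⁻¹`. -/
def dec (S : Garside G) (x : G) : G := S.phi x * x * (S.phi x)⁻¹

/-- The transport `α^{(1)} = 𝔭(x)⁻¹ α 𝔭(x^α)` of `α` at `x`. -/
def transport (S : Garside G) (x α : G) : G := (S.pp x)⁻¹ * α * S.pp (α⁻¹ * x * α)

/-- The iterated transport: `itTransport x i α = α^{(i)}`, the transport of `α^{(i-1)}`
at `𝔰^{i-1}(x)`, with `α^{(0)} = α`. -/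
def itTransport (S : Garside G) (x : G) : ℕ → G → G
  | 0, α => α
  | i + 1, α => S.transport ((S.sl)^[i] x) (S.itTransport x i α)

/-- `𝔓_i(x) = 𝔭(x) 𝔭(𝔰(x)) ⋯ 𝔭(𝔰^{i-1}(x))`, with `𝔓₀(x) = 1`. -/
def PP (S : Garside G) (x : G) : ℕ → G
  | 0 => 1
  | i + 1 => S.PP x i * S.pp ((S.sl)^[i] x)

/-- The summit set `SS(x)`. -/
def SS (S : Garside G) (x : G) : Set G :=
  {y | IsConj x y ∧ ∀ z : G, IsConj x z → S.inf z ≤ S.inf y}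

/-- The super summit set `SSS(x)`. -/
def SSS (S : Garside G) (x : G) : Set G :=
  {y | IsConj x y ∧ (∀ z : G, IsConj x z → S.inf z ≤ S.inf y) ∧
       (∀ z : G, IsConj x z → S.sup y ≤ S.sup z)}

/-- The ultra summit set `USS(x)`. -/
def USS (S : Garside G) (x : G) : Set G :=
  {y | y ∈ S.SSS x ∧ ∃ m : ℕ, 1 ≤ m ∧ (S.cyc)^[m] y = y}

/-- The reduced super summit set `RSSS(x)`. -/
def RSSS (S : Garside G) (x : G) : Set G :=
  {y | IsConj x y ∧ (∃ m : ℕ, 1 ≤ m ∧ (S.cyc)^[m] y = y) ∧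
       (∃ n : ℕ, 1 ≤ n ∧ (S.dec)^[n] y = y)}

/-- The set of sliding circuits `SC(x)`. -/
def SC (S : Garside G) (x : G) : Set G :=
  {y | IsConj x y ∧ ∃ m : ℕ, 1 ≤ m ∧ (S.sl)^[m] y = y}

end Garside

/-!
The condition `Δ^p ≼ α⁻¹ x α` is equivalent to `α ≼ x α Δ^(-p)`. Both sides are
monotone in `α` (right multiplication by powers of `Δ` preserves `≼`), so the conjugators
satisfying it are closed under `∨`. Likewise `α⁻¹ x α ≼ Δ^q` says `Δ^(-q) ≼ α⁻¹ x⁻¹ α`, the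
same condition for `x⁻¹`. Taking `p` and `q` to be the extremal `inf` and `sup` over the
conjugacy class gives the result.

Negative powers of `Δ` need `Δ P Δ⁻¹ ⊆ P`: conjugation by `Δ` permutes the finite generating set
of simples, so a power of `Δ` is central and `Δ a Δ⁻¹ = Δ^(-m) a Δ^m`.
-/

namespace Garside

variable {G : Type*} [Group G] (S : Garside G)

def simples : Set G := {a | a ∈ S.P ∧ a⁻¹ * S.Δ ∈ S.P}

theorem conj_delta_mem_simples {s : G} (hs : s ∈ S.simples) :
    S.Δ⁻¹ * s * S.Δ ∈ S.simples := by
  refine ⟨S.conj_pos s hs.1, ?_⟩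
  simpa [mul_assoc] using S.conj_pos _ hs.2

theorem exists_pow_delta_conj_eq_of_mem_simples :
    ∃ N : ℕ, 0 < N ∧ ∀ s ∈ S.simples, (S.Δ ^ N)⁻¹ * s * S.Δ ^ N = s := by
  have hmaps : Set.MapsTo (fun s => S.Δ⁻¹ * s * S.Δ) S.simples S.simples :=
    fun _ hs => S.conj_delta_mem_simples hs
  have : Finite S.simples := S.simples_finite
  have hinj : Function.Injective hmaps.restrict :=
    (Set.MapsTo.restrict_inj hmaps).2 fun a _ b _ h => by simpa using h
  let e : Equiv.Perm S.simples := Equiv.ofBijective _ (Finite.injective_iff_bijective.1 hinj)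
  have he : ∀ (n : ℕ) (s : S.simples), ((e ^ n) s : G) = (S.Δ ^ n)⁻¹ * s * S.Δ ^ n := by
    intro n
    induction n with
    | zero => simp
    | succ n ih =>
      intro s
      rw [pow_succ, Equiv.Perm.mul_apply, ih]
      simp only [e, Equiv.ofBijective_apply, Set.MapsTo.val_restrict_apply]
      group
  refine ⟨orderOf e, (isOfFinOrder_of_finite e).orderOf_pos, fun s hs => ?_⟩
  rw [← he _ ⟨s, hs⟩, pow_orderOf_eq_one]
  rfl

theorem exists_pow_delta_mem_center : ∃ N : ℕ, 0 < N ∧ S.Δ ^ N ∈ Subgroup.center G := by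
  obtain ⟨N, hN, hfix⟩ := S.exists_pow_delta_conj_eq_of_mem_simples
  refine ⟨N, hN, ?_⟩
  rw [← Subgroup.centralizer_univ, ← Subgroup.coe_top, ← S.simples_generate,
    Subgroup.centralizer_closure, Subgroup.mem_centralizer_iff]
  intro s hs
  have h := hfix s hs
  rwa [mul_assoc, inv_mul_eq_iff_eq_mul] at h

theorem conj_pow_delta_mem (n : ℕ) {a : G} (ha : a ∈ S.P) :
    (S.Δ ^ n)⁻¹ * a * S.Δ ^ n ∈ S.P := by
  induction n with
  | zero => simpa using ha
  | succ n ih => simpa [pow_succ, mul_assoc] using S.conj_pos _ ih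

theorem delta_conj_mem {a : G} (ha : a ∈ S.P) : S.Δ * a * S.Δ⁻¹ ∈ S.P := by
  obtain ⟨N, hN, hcen⟩ := S.exists_pow_delta_mem_center
  obtain ⟨m, rfl⟩ := Nat.exists_eq_add_of_lt hN
  have h : S.Δ * a * S.Δ⁻¹ = (S.Δ ^ m)⁻¹ * a * S.Δ ^ m :=
    calc S.Δ * a * S.Δ⁻¹ = (S.Δ ^ m)⁻¹ * (S.Δ ^ (0 + m + 1) * a) * S.Δ⁻¹ := by group
      _ = (S.Δ ^ m)⁻¹ * (a * S.Δ ^ (0 + m + 1)) * S.Δ⁻¹ := by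
        rw [Subgroup.mem_center_iff.1 hcen a]
      _ = (S.Δ ^ m)⁻¹ * a * S.Δ ^ m := by group
  exact h ▸ S.conj_pow_delta_mem m ha

theorem conj_zpow_delta_mem (k : ℤ) {a : G} (ha : a ∈ S.P) :
    (S.Δ ^ k)⁻¹ * a * S.Δ ^ k ∈ S.P := by
  induction k using Int.induction_on with
  | zero => simpa using ha
  | succ n ih => simpa [zpow_add_one, mul_assoc] using S.conj_pos _ ih
  | pred n ih => simpa [zpow_sub_one, mul_assoc] using S.delta_conj_mem ih

theorem conj_zpow_delta_mem_iff (k : ℤ) {a : G} :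
    (S.Δ ^ k)⁻¹ * a * S.Δ ^ k ∈ S.P ↔ a ∈ S.P := by
  refine ⟨fun h => ?_, S.conj_zpow_delta_mem k⟩
  simpa [mul_assoc] using S.conj_zpow_delta_mem (-k) h

theorem zpow_delta_mem {k : ℤ} (hk : 0 ≤ k) : S.Δ ^ k ∈ S.P := by
  lift k to ℕ using hk
  exact zpow_natCast S.Δ k ▸ S.P.pow_mem S.delta_mem k

variable {S} in
theorem le.trans {a b c : G} (hab : S.le a b) (hbc : S.le b c) : S.le a c := by
  simpa [le, mul_assoc] using S.P.mul_mem hab hbc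

theorem le_mul_left {a b : G} (g : G) (h : S.le a b) : S.le (g * a) (g * b) := by
  simpa [le, mul_assoc] using h

theorem le_mul_zpow_delta {a b : G} (k : ℤ) (h : S.le a b) :
    S.le (a * S.Δ ^ k) (b * S.Δ ^ k) := by
  simpa [le, mul_assoc] using S.conj_zpow_delta_mem k h

theorem zpow_delta_le_zpow_delta {k m : ℤ} (h : k ≤ m) : S.le (S.Δ ^ k) (S.Δ ^ m) := by
  simpa [le, ← zpow_neg, ← zpow_add, neg_add_eq_sub] using S.zpow_delta_mem (sub_nonneg.2 h)

theorem le_inf_iff {k : ℤ} {y : G} : k ≤ S.inf y ↔ S.le (S.Δ ^ k) y :=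
  ⟨fun h => (S.zpow_delta_le_zpow_delta h).trans (S.inf_le y), S.inf_max y k⟩

theorem sup_le_iff {k : ℤ} {y : G} : S.sup y ≤ k ↔ S.le y (S.Δ ^ k) :=
  ⟨fun h => le.trans (S.le_sup y) (S.zpow_delta_le_zpow_delta h), S.sup_min y k⟩

theorem zpow_delta_le_conj_iff {p : ℤ} {x α : G} :
    S.le (S.Δ ^ p) (α⁻¹ * x * α) ↔ S.le α (x * α * S.Δ ^ (-p)) := by
  rw [le, le, ← S.conj_zpow_delta_mem_iff (-p)]
  group

theorem le_zpow_delta_iff {q : ℤ} {y : G} : S.le y (S.Δ ^ q) ↔ S.le (S.Δ ^ (-q)) y⁻¹ := by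
  rw [le, le, ← S.conj_zpow_delta_mem_iff (-q)]
  group

theorem zpow_delta_le_conj_vee {p : ℤ} {x α β : G} (hα : S.le (S.Δ ^ p) (α⁻¹ * x * α))
    (hβ : S.le (S.Δ ^ p) (β⁻¹ * x * β)) :
    S.le (S.Δ ^ p) ((S.vee α β)⁻¹ * x * S.vee α β) := by
  rw [zpow_delta_le_conj_iff] at *
  exact S.vee_le α β _
    (hα.trans (S.le_mul_zpow_delta _ (S.le_mul_left x (S.le_vee_left α β))))
    (hβ.trans (S.le_mul_zpow_delta _ (S.le_mul_left x (S.le_vee_right α β))))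

theorem conj_vee_le_zpow_delta {q : ℤ} {x α β : G} (hα : S.le (α⁻¹ * x * α) (S.Δ ^ q))
    (hβ : S.le (β⁻¹ * x * β) (S.Δ ^ q)) :
    S.le ((S.vee α β)⁻¹ * x * S.vee α β) (S.Δ ^ q) := by
  simp only [le_zpow_delta_iff, mul_inv_rev, inv_inv, ← mul_assoc] at *
  exact S.zpow_delta_le_conj_vee hα hβ

end Garside

open Garside in
theorem statement13 {G : Type*} [Group G] (S : Garside G) (x α β : G)
    (hα : α⁻¹ * x * α ∈ S.SSS x) (hβ : β⁻¹ * x * β ∈ S.SSS x) :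
    (S.vee α β)⁻¹ * x * S.vee α β ∈ S.SSS x := by
  obtain ⟨hconjα, hinfα, hsupα⟩ := hα
  obtain ⟨-, hinfβ, hsupβ⟩ := hβ
  refine ⟨isConj_iff.2 ⟨(S.vee α β)⁻¹, by group⟩, fun z hz => (hinfα z hz).trans ?_,
    fun z hz => le_trans ?_ (hsupα z hz)⟩
  · exact S.le_inf_iff.2 <|
      S.zpow_delta_le_conj_vee (S.le_inf_iff.1 le_rfl) (S.le_inf_iff.1 (hinfβ _ hconjα))
  · exact S.sup_le_iff.2 <|
      S.conj_vee_le_zpow_delta (S.sup_le_iff.1 le_rfl) (S.sup_le_iff.1 (hsupβ _ hconjα))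

end GarsidePaper
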